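/- Suppose n is odd, n ≥ 3, and k = (n−3)/2, so that ν := k − n/2 + 1 = −1/2. Then for every z > 0 the consecutive-generation ratio is exactly γ_k(z) = (n−1)/(Bz); equivalently, B · z · 𝒜_k(z) = (n−1) · 𝒜_{k+1}(z) for all z > 0. -/
import Mathlib


open Real MeasureTheory Set Filter Topology

/-- The steady-state generation-`k` density in the normalized distance
`z = |x|√(λ/D)` from the origin:
`𝒜_k(z) = (μ(λB)^k/(k!(4πD)^{n/2})) ∫₀^∞ s^{k−n/2} exp(−λs − z²/(4λs)) ds`. -/
noncomputable def steadyDensity (n : ℕ) (lam D B mu : ℝ) (k : ℕ) (z : ℝ) : ℝ :=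
  (mu * (lam * B) ^ k / ((Nat.factorial k : ℝ) * (4 * π * D) ^ ((n : ℝ) / 2))) *
    ∫ s in Set.Ioi (0:ℝ),
      s ^ ((k : ℝ) - (n : ℝ) / 2) * Real.exp (-lam * s - z ^ 2 / (4 * lam * s))

/-- The consecutive-generation ratio `γ_k(z) = 𝒜_k(z)/𝒜_{k+1}(z)`. -/
noncomputable def genRatio (n : ℕ) (lam D B mu : ℝ) (k : ℕ) (z : ℝ) : ℝ :=
  steadyDensity n lam D B mu k z / steadyDensity n lam D B mu (k + 1) z

private lemma aux_integrable (lam z : ℝ) (hlam : 0 < lam) (hz : 0 < z) :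
    IntegrableOn
      (fun s : ℝ => s ^ (-(1:ℝ)/2) * Real.exp (-lam * s - z ^ 2 / (4 * lam * s)))
      (Ioi (0:ℝ)) := by
  have hmeas : Measurable
      (fun s : ℝ => s ^ (-(1:ℝ)/2) * Real.exp (-lam * s - z ^ 2 / (4 * lam * s))) := by
    fun_prop
  have hunion : Ioc (0:ℝ) 1 ∪ Ioi (1:ℝ) = Ioi (0:ℝ) := Ioc_union_Ioi_eq_Ioi zero_le_one
  rw [← hunion]
  apply IntegrableOn.union
  · -- bounded on (0,1]
    apply Measure.integrableOn_of_bounded (M := (4 * lam) / z ^ 2)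
      measure_Ioc_lt_top.ne hmeas.aestronglyMeasurable
    · refine (ae_restrict_iff' measurableSet_Ioc).2 (ae_of_all _ fun s hs => ?_)
      obtain ⟨hs0, hs1⟩ := hs
      have hrp : (0:ℝ) < s ^ (-(1:ℝ)/2) := Real.rpow_pos_of_pos hs0 _
      have h1 : Real.exp (-lam * s - z ^ 2 / (4 * lam * s))
          ≤ Real.exp (-(z ^ 2 / (4 * lam * s))) := by
        apply Real.exp_le_exp.2
        nlinarith [mul_pos hlam hs0]
      have hx : (0:ℝ) < z ^ 2 / (4 * lam * s) := by positivity
      have h2 : Real.exp (-(z ^ 2 / (4 * lam * s))) ≤ (4 * lam * s) / z ^ 2 := by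
        rw [Real.exp_neg]
        have hle : z ^ 2 / (4 * lam * s) ≤ Real.exp (z ^ 2 / (4 * lam * s)) := by
          linarith [Real.add_one_le_exp (z ^ 2 / (4 * lam * s))]
        calc (Real.exp (z ^ 2 / (4 * lam * s)))⁻¹ ≤ (z ^ 2 / (4 * lam * s))⁻¹ :=
              inv_anti₀ hx hle
          _ = 4 * lam * s / z ^ 2 := by field_simp
      have h3 : s ^ (-(1:ℝ)/2) * s = s ^ ((1:ℝ)/2) := by
        nth_rewrite 2 [← Real.rpow_one s]
        rw [← Real.rpow_add hs0]; norm_num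
      have h4 : s ^ ((1:ℝ)/2) ≤ 1 := Real.rpow_le_one hs0.le hs1 (by norm_num)
      have key : s ^ (-(1:ℝ)/2) * Real.exp (-lam * s - z ^ 2 / (4 * lam * s))
          ≤ 4 * lam / z ^ 2 := by
        calc s ^ (-(1:ℝ)/2) * Real.exp (-lam * s - z ^ 2 / (4 * lam * s))
            ≤ s ^ (-(1:ℝ)/2) * (4 * lam * s / z ^ 2) :=
              mul_le_mul_of_nonneg_left (h1.trans h2) hrp.le
          _ = (s ^ (-(1:ℝ)/2) * s) * (4 * lam / z ^ 2) := by ring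
          _ = s ^ ((1:ℝ)/2) * (4 * lam / z ^ 2) := by rw [h3]
          _ ≤ 1 * (4 * lam / z ^ 2) := by
              apply mul_le_mul_of_nonneg_right h4 (by positivity)
          _ = 4 * lam / z ^ 2 := one_mul _
      have hnn : 0 ≤ s ^ (-(1:ℝ)/2) * Real.exp (-lam * s - z ^ 2 / (4 * lam * s)) := by
        positivity
      rw [Real.norm_eq_abs, abs_of_nonneg hnn]
      exact key
  · -- dominated by exp(-lam s) on (1,∞)
    apply Integrable.mono' (exp_neg_integrableOn_Ioi 1 hlam) hmeas.aestronglyMeasurable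
    refine (ae_restrict_iff' measurableSet_Ioi).2 (ae_of_all _ fun s hs => ?_)
    have hs1 : (1:ℝ) < s := hs
    have hs0 : (0:ℝ) < s := lt_trans one_pos hs1
    have hnn : 0 ≤ s ^ (-(1:ℝ)/2) * Real.exp (-lam * s - z ^ 2 / (4 * lam * s)) := by
      positivity
    rw [Real.norm_eq_abs, abs_of_nonneg hnn]
    have h1 : s ^ (-(1:ℝ)/2) ≤ 1 :=
      Real.rpow_le_one_of_one_le_of_nonpos hs1.le (by norm_num)
    have h2 : Real.exp (-lam * s - z ^ 2 / (4 * lam * s)) ≤ Real.exp (-lam * s) := by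
      apply Real.exp_le_exp.2
      have : 0 < z ^ 2 / (4 * lam * s) := by positivity
      linarith
    calc s ^ (-(1:ℝ)/2) * Real.exp (-lam * s - z ^ 2 / (4 * lam * s))
        ≤ 1 * Real.exp (-lam * s) :=
          mul_le_mul h1 h2 (Real.exp_pos _).le zero_le_one
      _ = Real.exp (-lam * s) := one_mul _

private lemma aux_pos (lam z : ℝ) (hlam : 0 < lam) (hz : 0 < z) :
    0 < ∫ s in Ioi (0:ℝ),
      s ^ (-(1:ℝ)/2) * Real.exp (-lam * s - z ^ 2 / (4 * lam * s)) := by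
  rw [setIntegral_pos_iff_support_of_nonneg_ae]
  · have hsub : Ioi (0:ℝ) ⊆ Function.support
        (fun s : ℝ => s ^ (-(1:ℝ)/2) * Real.exp (-lam * s - z ^ 2 / (4 * lam * s))) := by
      intro s hs
      have hs0 : (0:ℝ) < s := hs
      have : 0 < s ^ (-(1:ℝ)/2) * Real.exp (-lam * s - z ^ 2 / (4 * lam * s)) := by
        positivity
      exact ne_of_gt this
    have : (Function.support
        (fun s : ℝ => s ^ (-(1:ℝ)/2) * Real.exp (-lam * s - z ^ 2 / (4 * lam * s))))
        ∩ Ioi (0:ℝ) = Ioi (0:ℝ) := inter_eq_right.2 hsub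
    rw [this, Real.volume_Ioi]
    exact ENNReal.zero_lt_top
  · refine (ae_restrict_iff' measurableSet_Ioi).2 (ae_of_all _ fun s hs => ?_)
    have hs0 : (0:ℝ) < s := hs
    positivity
  · exact aux_integrable lam z hlam hz

private lemma aux_key (lam z : ℝ) (hlam : 0 < lam) (hz : 0 < z) :
    (∫ s in Ioi (0:ℝ),
        z * (s ^ (-(3:ℝ)/2) * Real.exp (-lam * s - z ^ 2 / (4 * lam * s))))
      = ∫ s in Ioi (0:ℝ),
        (2 * lam) * (s ^ (-(1:ℝ)/2) * Real.exp (-lam * s - z ^ 2 / (4 * lam * s))) := by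
  set a : ℝ := 4 * lam ^ 2 / z ^ 2 with ha
  have ha0 : (0:ℝ) < a := by positivity
  set g : ℝ → ℝ := fun u => z * u ^ (-(1:ℝ)/2) * Real.exp (-lam / u - z ^ 2 * u / (4 * lam))
    with hg
  have step1 : (∫ s in Ioi (0:ℝ),
      z * (s ^ (-(3:ℝ)/2) * Real.exp (-lam * s - z ^ 2 / (4 * lam * s))))
      = ∫ u in Ioi (0:ℝ), g u := by
    rw [← integral_comp_rpow_Ioi g (p := (-1:ℝ)) (by norm_num)]
    refine setIntegral_congr_fun measurableSet_Ioi fun s hs => ?_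
    have hs0 : (0:ℝ) < s := hs
    have h1 : s ^ ((-1:ℝ)) = s⁻¹ := Real.rpow_neg_one s
    have h2 : (s ^ ((-1:ℝ))) ^ (-(1:ℝ)/2) = s ^ ((1:ℝ)/2) := by
      rw [← Real.rpow_mul hs0.le]; norm_num
    have h3 : s ^ ((-1:ℝ) - 1) * s ^ ((1:ℝ)/2) = s ^ (-(3:ℝ)/2) := by
      rw [← Real.rpow_add hs0]; norm_num
    have h4 : -lam / (s ^ ((-1:ℝ))) = -lam * s := by
      rw [h1]; field_simp
    have h5 : z ^ 2 * (s ^ ((-1:ℝ))) / (4 * lam) = z ^ 2 / (4 * lam * s) := by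
      rw [h1]; field_simp
    simp only [hg, smul_eq_mul]
    rw [h2, h4, h5, abs_neg, abs_one]
    symm
    calc (1 : ℝ) * s ^ ((-1:ℝ) - 1) * (z * s ^ ((1:ℝ)/2) *
          Real.exp (-lam * s - z ^ 2 / (4 * lam * s)))
        = z * ((s ^ ((-1:ℝ) - 1) * s ^ ((1:ℝ)/2)) *
          Real.exp (-lam * s - z ^ 2 / (4 * lam * s))) := by ring
      _ = z * (s ^ (-(3:ℝ)/2) * Real.exp (-lam * s - z ^ 2 / (4 * lam * s))) := by rw [h3]
  have step2 : (∫ u in Ioi (0:ℝ), g u)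
      = a • ∫ t in Ioi (0:ℝ), g (a * t) := by
    rw [integral_comp_mul_left_Ioi g 0 ha0, mul_zero, smul_smul,
      mul_inv_cancel₀ ha0.ne', one_smul]
  have step3 : (∫ t in Ioi (0:ℝ), g (a * t))
      = ∫ t in Ioi (0:ℝ),
        (z ^ 2 / (2 * lam)) * (t ^ (-(1:ℝ)/2) * Real.exp (-lam * t - z ^ 2 / (4 * lam * t))) := by
    refine setIntegral_congr_fun measurableSet_Ioi fun t ht => ?_
    have ht0 : (0:ℝ) < t := ht
    have hat : (0:ℝ) < a * t := mul_pos ha0 ht0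
    have h1 : (a * t) ^ (-(1:ℝ)/2) = a ^ (-(1:ℝ)/2) * t ^ (-(1:ℝ)/2) :=
      Real.mul_rpow ha0.le ht0.le
    have h2 : a ^ (-(1:ℝ)/2) = z / (2 * lam) := by
      have hb : (0:ℝ) < 2 * lam / z := by positivity
      have : a = (2 * lam / z) ^ (2:ℕ) := by
        rw [ha]; field_simp; ring
      rw [this, ← Real.rpow_natCast (2 * lam / z) 2, ← Real.rpow_mul hb.le]
      norm_num
      rw [Real.rpow_neg_one]
      field_simp
    have h3 : -lam / (a * t) = -(z ^ 2 / (4 * lam * t)) := by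
      rw [ha]; field_simp
    have h4 : z ^ 2 * (a * t) / (4 * lam) = lam * t := by
      rw [ha]; field_simp
    simp only [hg]
    rw [h1, h2, h3, h4]
    have : -(z ^ 2 / (4 * lam * t)) - lam * t = -lam * t - z ^ 2 / (4 * lam * t) := by ring
    rw [this]
    field_simp
  rw [step1, step2, step3, ← integral_smul]
  refine setIntegral_congr_fun measurableSet_Ioi fun t ht => ?_
  have ht0 : (0:ℝ) < t := ht
  simp only [smul_eq_mul]
  have : a * (z ^ 2 / (2 * lam)) = 2 * lam := by
    rw [ha]; field_simp; ring
  calc a * (z ^ 2 / (2 * lam) * (t ^ (-(1:ℝ)/2) *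
        Real.exp (-lam * t - z ^ 2 / (4 * lam * t))))
      = (a * (z ^ 2 / (2 * lam))) * (t ^ (-(1:ℝ)/2) *
        Real.exp (-lam * t - z ^ 2 / (4 * lam * t))) := by ring
    _ = 2 * lam * (t ^ (-(1:ℝ)/2) *
        Real.exp (-lam * t - z ^ 2 / (4 * lam * t))) := by rw [this]

/-- For odd `n ≥ 3` and `k = (n−3)/2` (so `ν = −1/2`): for every `z > 0`,
`γ_k(z) = (n−1)/(Bz)`; equivalently `B z 𝒜_k(z) = (n−1) 𝒜_{k+1}(z)`. -/
theorem genRatio_half_integer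
    (n : ℕ) (hn : 3 ≤ n) (hodd : Odd n) (lam D B mu : ℝ)
    (hlam : 0 < lam) (hD : 0 < D) (hB : 0 < B) (hmu : 0 < mu)
    (k : ℕ) (hk : k = (n - 3) / 2) (z : ℝ) (hz : 0 < z) :
    genRatio n lam D B mu k z = ((n : ℝ) - 1) / (B * z) ∧
    B * z * steadyDensity n lam D B mu k z =
      ((n : ℝ) - 1) * steadyDensity n lam D B mu (k + 1) z := by
  obtain ⟨m, hm⟩ := hodd
  have hm1 : 1 ≤ m := by omega
  have hkm : k + 1 = m := by omega
  have hkr : (k:ℝ) = (m:ℝ) - 1 := by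
    have : ((k:ℝ) + 1) = (m:ℝ) := by exact_mod_cast hkm
    linarith
  have hnr : (n:ℝ) = 2 * (m:ℝ) + 1 := by exact_mod_cast hm
  have h3 : (k:ℝ) - (n:ℝ)/2 = -(3:ℝ)/2 := by rw [hkr, hnr]; ring
  have h1 : ((k+1:ℕ):ℝ) - (n:ℝ)/2 = -(1:ℝ)/2 := by push_cast; rw [hkr, hnr]; ring
  set I3 : ℝ := ∫ s in Ioi (0:ℝ),
      s ^ (-(3:ℝ)/2) * Real.exp (-lam * s - z ^ 2 / (4 * lam * s)) with hI3
  set I1 : ℝ := ∫ s in Ioi (0:ℝ),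
      s ^ (-(1:ℝ)/2) * Real.exp (-lam * s - z ^ 2 / (4 * lam * s)) with hI1
  have hkey : z * I3 = 2 * lam * I1 := by
    have := aux_key lam z hlam hz
    rwa [MeasureTheory.integral_const_mul, MeasureTheory.integral_const_mul] at this
  have hI1pos : 0 < I1 := aux_pos lam z hlam hz
  have hP : (0:ℝ) < (4 * π * D) ^ ((n:ℝ)/2) :=
    Real.rpow_pos_of_pos (by positivity) _
  have hAk : steadyDensity n lam D B mu k z =
      (mu * (lam * B) ^ k / ((Nat.factorial k : ℝ) * (4 * π * D) ^ ((n : ℝ) / 2))) * I3 := by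
    rw [steadyDensity, h3, hI3]
  have hAk1 : steadyDensity n lam D B mu (k+1) z =
      (mu * (lam * B) ^ (k+1) /
        ((Nat.factorial (k+1) : ℝ) * (4 * π * D) ^ ((n : ℝ) / 2))) * I1 := by
    rw [steadyDensity, h1, hI1]
  have hfac : (Nat.factorial (k+1) : ℝ) = ((k:ℝ) + 1) * (Nat.factorial k : ℝ) := by
    rw [Nat.factorial_succ]; push_cast; ring
  have hn1 : (n:ℝ) - 1 = 2 * ((k:ℝ) + 1) := by rw [hnr, hkr]; ring
  have hfk : (0:ℝ) < (Nat.factorial k : ℝ) := by exact_mod_cast Nat.factorial_pos k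
  have heq2 : B * z * steadyDensity n lam D B mu k z =
      ((n : ℝ) - 1) * steadyDensity n lam D B mu (k + 1) z := by
    rw [hAk, hAk1, hn1, hfac, pow_succ]
    have hk1 : ((k:ℝ) + 1) ≠ 0 := by positivity
    rw [show B * z * (mu * (lam * B) ^ k /
        ((Nat.factorial k : ℝ) * (4 * π * D) ^ ((n : ℝ) / 2)) * I3)
        = (B * (mu * (lam * B) ^ k /
        ((Nat.factorial k : ℝ) * (4 * π * D) ^ ((n : ℝ) / 2)))) * (z * I3) from by ring, hkey]
    field_simp
  refine ⟨?_, heq2⟩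
  have hAk1pos : 0 < steadyDensity n lam D B mu (k+1) z := by
    rw [hAk1]
    have hc : 0 < mu * (lam * B) ^ (k+1) /
        ((Nat.factorial (k+1) : ℝ) * (4 * π * D) ^ ((n : ℝ) / 2)) := by
      apply div_pos (by positivity)
      apply mul_pos _ hP
      exact_mod_cast Nat.factorial_pos (k+1)
    exact mul_pos hc hI1pos
  rw [genRatio, div_eq_div_iff hAk1pos.ne' (by positivity : (0:ℝ) < B * z).ne']
  linear_combination heq2
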